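/- If X has density f_α and Z is standard normal independent of X, then (X+Z)/√2 has density f_β with β = α/√(2+α²). -/

import Mathlib

open MeasureTheory Real Filter

/-- Standard normal density. -/
noncomputable def phi (x : ℝ) : ℝ := (Real.sqrt (2 * π))⁻¹ * Real.exp (-x ^ 2 / 2)

/-- Standard normal CDF. -/
noncomputable def Phi (x : ℝ) : ℝ := ∫ t in Set.Iic x, phi t

/-- Skew normal density with parameter α. -/
noncomputable def skewPdf (α x : ℝ) : ℝ := 2 * phi x * Phi (α * x)
open ProbabilityTheory
open scoped ENNReal NNReal

lemma continuous_phi : Continuous phi := by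
  unfold phi; fun_prop

lemma phi_nonneg (x : ℝ) : 0 ≤ phi x :=
  mul_nonneg (inv_nonneg.2 (Real.sqrt_nonneg _)) (Real.exp_nonneg _)

lemma phi_le (x : ℝ) : phi x ≤ (Real.sqrt (2 * π))⁻¹ := by
  unfold phi
  nlinarith [Real.exp_le_one_iff.2 (by nlinarith [sq_nonneg x] : -x^2/2 ≤ 0),
    Real.exp_pos (-x^2/2), inv_nonneg.2 (Real.sqrt_nonneg (2*π))]

lemma phi_neg (x : ℝ) : phi (-x) = phi x := by simp [phi]

lemma integrable_phi : Integrable phi := by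
  have h := integrable_exp_neg_mul_sq (by norm_num : (0:ℝ) < 1/2)
  have : phi = fun x => (Real.sqrt (2 * π))⁻¹ * Real.exp (-(1/2) * x ^ 2) := by
    funext x; unfold phi; ring_nf
  rw [this]
  exact h.const_mul _

lemma integral_phi : ∫ x, phi x = 1 := by
  have h := integral_gaussian (1/2 : ℝ)
  have h2 : ∫ x : ℝ, phi x = (Real.sqrt (2 * π))⁻¹ * ∫ x : ℝ, Real.exp (-(1/2) * x ^ 2) := by
    rw [← integral_const_mul]; congr 1; funext x; unfold phi; ring_nf
  rw [h2, h]
  rw [show π / (1/2:ℝ) = 2 * π by ring]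
  rw [inv_mul_cancel₀ (by positivity : Real.sqrt (2*π) ≠ 0)]

lemma Phi_add_Phi_neg (x : ℝ) : Phi x + Phi (-x) = 1 := by
  have h1 : Phi (-x) = ∫ t in Set.Ioi x, phi t := by
    unfold Phi
    rw [← integral_comp_neg_Ioi x phi]
    exact setIntegral_congr_fun measurableSet_Ioi fun t _ => phi_neg t
  rw [h1]
  unfold Phi
  rw [intervalIntegral.integral_Iic_add_Ioi integrable_phi.integrableOn integrable_phi.integrableOn]
  exact integral_phi

lemma Phi_zero : Phi 0 = 1/2 := by
  have := Phi_add_Phi_neg 0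
  rw [neg_zero] at this; linarith

lemma Phi_nonneg (x : ℝ) : 0 ≤ Phi x :=
  setIntegral_nonneg measurableSet_Iic fun t _ => phi_nonneg t

lemma Phi_le_one (x : ℝ) : Phi x ≤ 1 := by
  rw [← integral_phi]
  exact setIntegral_le_integral integrable_phi (Filter.Eventually.of_forall phi_nonneg)

lemma hasDerivAt_Phi (x : ℝ) : HasDerivAt Phi (phi x) x := by
  have heq : Phi = fun y => Phi 0 + ∫ t in (0:ℝ)..y, phi t := by
    funext y
    rw [← intervalIntegral.integral_Iic_sub_Iic integrable_phi.integrableOn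
      integrable_phi.integrableOn]
    unfold Phi; ring
  rw [heq]
  exact (intervalIntegral.integral_hasDerivAt_right
    integrable_phi.intervalIntegrable
    (continuous_phi.stronglyMeasurable.stronglyMeasurableAtFilter)
    continuous_phi.continuousAt).const_add _

lemma continuous_Phi : Continuous Phi := by
  rw [continuous_iff_continuousAt]
  exact fun x => (hasDerivAt_Phi x).continuousAt

lemma gauss_int {k : ℝ} (hk : 0 < k) (m : ℝ) :
    ∫ x : ℝ, Real.exp (-(k * (x - m)^2)) = Real.sqrt (π / k) := by
  have h1 : (∫ x : ℝ, Real.exp (-(k * (x - m)^2)))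
      = ∫ x : ℝ, Real.exp (-k * x^2) := by
    rw [← integral_add_right_eq_self (fun x => Real.exp (-k * x^2)) (-m)]
    congr 1; funext x; ring_nf
  rw [h1, integral_gaussian]

lemma integrable_phi_Phi (c b : ℝ) : Integrable (fun t => phi t * Phi (c*t + b)) := by
  refine integrable_phi.mono' ?_ ?_
  · exact (continuous_phi.mul (continuous_Phi.comp (by fun_prop))).aestronglyMeasurable
  · refine Filter.Eventually.of_forall fun t => ?_
    rw [Real.norm_eq_abs, abs_mul, abs_of_nonneg (phi_nonneg t), abs_of_nonneg (Phi_nonneg _)]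
    calc phi t * Phi (c*t+b) ≤ phi t * 1 :=
          mul_le_mul_of_nonneg_left (Phi_le_one _) (phi_nonneg t)
    _ = phi t := mul_one _

lemma integrable_phi_phi (c b : ℝ) : Integrable (fun t => phi t * phi (c*t + b)) := by
  refine (integrable_phi.const_mul ((Real.sqrt (2*π))⁻¹)).mono' ?_ ?_
  · exact (continuous_phi.mul (continuous_phi.comp (by fun_prop))).aestronglyMeasurable
  · refine Filter.Eventually.of_forall fun t => ?_
    rw [Real.norm_eq_abs, abs_mul, abs_of_nonneg (phi_nonneg t), abs_of_nonneg (phi_nonneg _)]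
    calc phi t * phi (c*t+b) ≤ phi t * (Real.sqrt (2*π))⁻¹ :=
          mul_le_mul_of_nonneg_left (phi_le _) (phi_nonneg t)
    _ = (Real.sqrt (2*π))⁻¹ * phi t := mul_comm _ _

lemma int_phi_phi (c b : ℝ) :
    ∫ t : ℝ, phi t * phi (c*t + b)
      = (Real.sqrt (1+c^2))⁻¹ * phi (b / Real.sqrt (1+c^2)) := by
  have hs : (0:ℝ) < 1 + c^2 := by positivity
  have h2π : (0:ℝ) < 2*π := by positivity
  have hπ : (0:ℝ) < 2*π := by positivity
  have hsqrt2π : Real.sqrt (2*π) ≠ 0 := by positivity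
  have hsqrts : Real.sqrt (1+c^2) ≠ 0 := by positivity
  have hexp : ∀ t : ℝ, phi t * phi (c*t + b)
      = (2*π)⁻¹ * Real.exp (-(b^2/(2*(1+c^2))))
        * Real.exp (-(((1+c^2)/2) * (t - (-(c*b/(1+c^2))))^2)) := by
    intro t
    unfold phi
    rw [mul_mul_mul_comm, ← mul_inv, Real.mul_self_sqrt h2π.le, ← Real.exp_add, mul_assoc,
      ← Real.exp_add]
    congr 2
    field_simp
    ring
  calc ∫ t : ℝ, phi t * phi (c*t + b)
      = ∫ t : ℝ, (2*π)⁻¹ * Real.exp (-(b^2/(2*(1+c^2))))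
          * Real.exp (-(((1+c^2)/2) * (t - (-(c*b/(1+c^2))))^2)) := by
        congr 1; funext t; exact hexp t
    _ = (2*π)⁻¹ * Real.exp (-(b^2/(2*(1+c^2))))
          * ∫ t : ℝ, Real.exp (-(((1+c^2)/2) * (t - (-(c*b/(1+c^2))))^2)) := by
        rw [integral_const_mul]
    _ = (2*π)⁻¹ * Real.exp (-(b^2/(2*(1+c^2)))) * Real.sqrt (π / ((1+c^2)/2)) := by
        rw [gauss_int (by positivity) _]
    _ = (Real.sqrt (1+c^2))⁻¹ * phi (b / Real.sqrt (1+c^2)) := by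
        unfold phi
        rw [show π / ((1+c^2)/2) = (2*π) / (1+c^2) by field_simp,
          Real.sqrt_div h2π.le, div_pow, Real.sq_sqrt hs.le]
        rw [show (2*π)⁻¹ * Real.exp (-(b^2/(2*(1+c^2)))) * (Real.sqrt (2*π) / Real.sqrt (1+c^2))
            = (Real.sqrt (1+c^2))⁻¹ * (((2*π)⁻¹ * Real.sqrt (2*π)) * Real.exp (-(b^2/(2*(1+c^2))))) by ring]
        rw [show (2*π)⁻¹ * Real.sqrt (2*π) = (Real.sqrt (2*π))⁻¹ by
          rw [← Real.mul_self_sqrt h2π.le, mul_inv]; field_simp; rw [Real.sqrt_sq (Real.sqrt_nonneg _)]]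
        rw [neg_div]
        congr 3
        rw [div_div]
        ring


lemma hasDerivAt_int_phi_Phi (c b : ℝ) :
    HasDerivAt (fun x => ∫ t : ℝ, phi t * Phi (c*t + x))
      (∫ t : ℝ, phi t * phi (c*t + b)) b := by
  have h := hasDerivAt_integral_of_dominated_loc_of_deriv_le
    (F := fun x t => phi t * Phi (c*t + x))
    (F' := fun x t => phi t * phi (c*t + x))
    (bound := fun t => (Real.sqrt (2*π))⁻¹ * phi t)
    (μ := volume) (x₀ := b) (s := Metric.ball b 1) (Metric.ball_mem_nhds b one_pos)
    (Filter.Eventually.of_forall fun x =>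
      (continuous_phi.mul (continuous_Phi.comp (by fun_prop))).aestronglyMeasurable)
    (integrable_phi_Phi c b)
    (continuous_phi.mul (continuous_phi.comp (by fun_prop))).aestronglyMeasurable
    (Filter.Eventually.of_forall fun t x _ => by
      rw [Real.norm_eq_abs, abs_mul, abs_of_nonneg (phi_nonneg t), abs_of_nonneg (phi_nonneg _)]
      calc phi t * phi (c*t+x) ≤ phi t * (Real.sqrt (2*π))⁻¹ :=
            mul_le_mul_of_nonneg_left (phi_le _) (phi_nonneg t)
      _ = (Real.sqrt (2*π))⁻¹ * phi t := mul_comm _ _)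
    ((integrable_phi.const_mul _))
    (Filter.Eventually.of_forall fun t x _ => by
      have h1 : HasDerivAt (fun y => c*t + y) 1 x := (hasDerivAt_id x).const_add (c*t)
      have h2 : HasDerivAt (fun y => Phi (c*t + y)) (phi (c*t + x)) x := by
        have := (hasDerivAt_Phi (c*t + x)).comp x h1; rw [mul_one] at this; exact this
      simpa [mul_comm] using h2.const_mul (phi t))
  exact h.2

lemma integral_phi_Phi (c b : ℝ) :
    ∫ t : ℝ, phi t * Phi (c*t + b) = Phi (b / Real.sqrt (1 + c^2)) := by
  have hs : (0:ℝ) < 1 + c^2 := by positivity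
  have hsq : Real.sqrt (1 + c^2) ≠ 0 := by positivity
  set G : ℝ → ℝ := fun x => ∫ t : ℝ, phi t * Phi (c*t + x) with hG
  set R : ℝ → ℝ := fun x => Phi (x / Real.sqrt (1 + c^2)) with hR
  have hRderiv : ∀ x, HasDerivAt R (∫ t : ℝ, phi t * phi (c*t + x)) x := by
    intro x
    have h1 : HasDerivAt (fun y : ℝ => y / Real.sqrt (1+c^2))
        (Real.sqrt (1+c^2))⁻¹ x := by
      simpa [div_eq_mul_inv] using (hasDerivAt_id x).div_const (Real.sqrt (1+c^2))
    have h2 := (hasDerivAt_Phi (x / Real.sqrt (1+c^2))).comp x h1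
    rw [int_phi_phi]
    rw [mul_comm]; exact h2
  have hzero : ∀ x, deriv (fun y => G y - R y) x = 0 := by
    intro x
    refine ((hasDerivAt_int_phi_Phi c x).sub (hRderiv x)).deriv.trans ?_
    ring
  have hdiff : Differentiable ℝ (fun y => G y - R y) := fun x =>
    ((hasDerivAt_int_phi_Phi c x).sub (hRderiv x)).differentiableAt
  have hconst := is_const_of_deriv_eq_zero hdiff hzero b 0
  have hG0 : G 0 = 1/2 := by
    have hswap : G 0 = ∫ t : ℝ, phi t * (1 - Phi (c*t)) := by
      rw [hG]
      simp only [add_zero]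
      have h1 : (∫ t : ℝ, phi t * Phi (c*t)) = ∫ t : ℝ, phi (-t) * Phi (c*(-t)) :=
        ((Measure.measurePreserving_neg (volume : Measure ℝ)).integral_comp
          measurableEmbedding_neg _).symm
      rw [h1]
      congr 1; funext t
      rw [phi_neg, show c * -t = -(c*t) by ring,
        show Phi (-(c*t)) = 1 - Phi (c*t) by nlinarith [Phi_add_Phi_neg (c*t)]]
    have hexpand : (∫ t : ℝ, phi t * (1 - Phi (c*t)))
        = (∫ t : ℝ, phi t) - ∫ t : ℝ, phi t * Phi (c*t) := by
      rw [← integral_sub integrable_phi (by simpa using integrable_phi_Phi c 0)]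
      congr 1; funext t; ring
    have : G 0 = 1 - G 0 := by
      calc G 0 = ∫ t : ℝ, phi t * (1 - Phi (c*t)) := hswap
      _ = 1 - ∫ t : ℝ, phi t * Phi (c*t) := by rw [hexpand, integral_phi]
      _ = 1 - G 0 := by rw [hG]; simp only [add_zero]
    linarith
  have hR0 : R 0 = 1/2 := by rw [hR]; simp [Phi_zero]
  have : G b - R b = G 0 - R 0 := hconst
  rw [hG0, hR0] at this
  have : G b = R b := by linarith
  simpa [hG, hR] using this

lemma skewPdf_nonneg (α x : ℝ) : 0 ≤ skewPdf α x :=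
  mul_nonneg (mul_nonneg (by norm_num) (phi_nonneg x)) (Phi_nonneg _)

lemma continuous_skewPdf (α : ℝ) : Continuous (skewPdf α) := by
  unfold skewPdf
  exact (continuous_const.mul continuous_phi).mul (continuous_Phi.comp (by fun_prop))

lemma skewPdf_le (α x : ℝ) : skewPdf α x ≤ 2 * phi x := by
  unfold skewPdf
  calc 2 * phi x * Phi (α*x) ≤ 2 * phi x * 1 :=
        mul_le_mul_of_nonneg_left (Phi_le_one _) (by nlinarith [phi_nonneg x])
  _ = 2 * phi x := mul_one _

lemma integrable_conv (α u : ℝ) :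
    Integrable (fun x => Real.sqrt 2 * skewPdf α x * phi (Real.sqrt 2 * u - x)) := by
  refine ((integrable_phi.const_mul (Real.sqrt 2 * 2 * (Real.sqrt (2*π))⁻¹))).mono' ?_ ?_
  · exact ((continuous_const.mul (continuous_skewPdf α)).mul
      (continuous_phi.comp (by fun_prop))).aestronglyMeasurable
  · refine Filter.Eventually.of_forall fun x => ?_
    have h1 : (0:ℝ) ≤ Real.sqrt 2 := Real.sqrt_nonneg 2
    rw [Real.norm_eq_abs, abs_mul, abs_mul, abs_of_nonneg h1,
      abs_of_nonneg (skewPdf_nonneg α x), abs_of_nonneg (phi_nonneg _)]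
    calc Real.sqrt 2 * skewPdf α x * phi (Real.sqrt 2 * u - x)
        ≤ Real.sqrt 2 * (2 * phi x) * (Real.sqrt (2*π))⁻¹ := by
          apply mul_le_mul
          · exact mul_le_mul_of_nonneg_left (skewPdf_le α x) h1
          · exact phi_le _
          · exact phi_nonneg _
          · exact mul_nonneg h1 (by nlinarith [phi_nonneg x])
    _ = Real.sqrt 2 * 2 * (Real.sqrt (2*π))⁻¹ * phi x := by ring

lemma convEq (α u : ℝ) :
    ∫ x : ℝ, Real.sqrt 2 * skewPdf α x * phi (Real.sqrt 2 * u - x)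
      = skewPdf (α / Real.sqrt (2 + α^2)) u := by
  have hs2 : (0:ℝ) < Real.sqrt 2 := Real.sqrt_pos.2 (by norm_num)
  have hsq2 : (Real.sqrt 2)^2 = 2 := Real.sq_sqrt (by norm_num)
  set g : ℝ → ℝ := fun x => Real.sqrt 2 * skewPdf α x * phi (Real.sqrt 2 * u - x) with hg
  have step1 : (∫ x : ℝ, g x) = (Real.sqrt 2)⁻¹ * ∫ t : ℝ, g ((Real.sqrt 2)⁻¹ * (t + u)) := by
    have h1 : (∫ t : ℝ, g ((Real.sqrt 2)⁻¹ * (t + u)))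
        = ∫ t : ℝ, g ((Real.sqrt 2)⁻¹ * t) := by
      exact integral_add_right_eq_self (fun t => g ((Real.sqrt 2)⁻¹ * t)) u
    have h2 : (∫ t : ℝ, g ((Real.sqrt 2)⁻¹ * t)) = |((Real.sqrt 2)⁻¹)⁻¹| • ∫ x : ℝ, g x :=
      Measure.integral_comp_mul_left g ((Real.sqrt 2)⁻¹)
    rw [h1, h2, inv_inv, abs_of_pos hs2, smul_eq_mul, ← mul_assoc,
      inv_mul_cancel₀ hs2.ne', one_mul]
  have step2 : ∀ t : ℝ, g ((Real.sqrt 2)⁻¹ * (t + u))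
      = 2 * Real.sqrt 2 * phi u *
        (phi t * Phi ((α / Real.sqrt 2) * t + α * u / Real.sqrt 2)) := by
    intro t
    show Real.sqrt 2 * skewPdf α ((Real.sqrt 2)⁻¹ * (t + u))
        * phi (Real.sqrt 2 * u - (Real.sqrt 2)⁻¹ * (t + u)) = _
    have harg : Real.sqrt 2 * u - (Real.sqrt 2)⁻¹ * (t + u) = (u - t) / Real.sqrt 2 := by
      field_simp
      linear_combination u * hsq2
    have hphi : phi ((Real.sqrt 2)⁻¹ * (t + u)) * phi ((u - t) / Real.sqrt 2)
        = phi u * phi t := by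
      unfold phi
      rw [mul_mul_mul_comm, ← Real.exp_add, mul_mul_mul_comm, ← Real.exp_add]
      congr 1
      rw [div_pow, mul_pow, hsq2, show ((Real.sqrt 2)⁻¹)^2 = 2⁻¹ by rw [inv_pow, hsq2]]
      ring
    have hPhi : α * ((Real.sqrt 2)⁻¹ * (t + u))
        = (α / Real.sqrt 2) * t + α * u / Real.sqrt 2 := by
      field_simp
    unfold skewPdf
    rw [harg, hPhi]
    rw [show Real.sqrt 2 * (2 * phi ((Real.sqrt 2)⁻¹ * (t+u)) *
          Phi ((α / Real.sqrt 2) * t + α * u / Real.sqrt 2)) * phi ((u-t)/Real.sqrt 2)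
        = 2 * Real.sqrt 2 * (phi ((Real.sqrt 2)⁻¹ * (t+u)) * phi ((u-t)/Real.sqrt 2))
          * Phi ((α / Real.sqrt 2) * t + α * u / Real.sqrt 2) by ring, hphi]
    ring
  rw [step1]
  simp_rw [step2]
  rw [integral_const_mul, integral_phi_Phi]
  have harg2 : α * u / Real.sqrt 2 / Real.sqrt (1 + (α / Real.sqrt 2)^2)
      = (α / Real.sqrt (2 + α^2)) * u := by
    have h1 : 1 + (α / Real.sqrt 2)^2 = (2 + α^2)/2 := by
      rw [div_pow, hsq2]; ring
    have hx : Real.sqrt (2 + α^2) ≠ 0 := by positivity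
    rw [h1, Real.sqrt_div (by positivity : (0:ℝ) ≤ 2+α^2) 2]
    field_simp
  rw [harg2]
  unfold skewPdf
  field_simp

lemma lint_conv (α u : ℝ) :
    (∫⁻ x : ℝ, ENNReal.ofReal (Real.sqrt 2 * skewPdf α x * phi (Real.sqrt 2 * u - x)))
      = ENNReal.ofReal (skewPdf (α / Real.sqrt (2 + α^2)) u) := by
  rw [← ofReal_integral_eq_lintegral_ofReal (integrable_conv α u)
      (Filter.Eventually.of_forall fun x => by
        have := skewPdf_nonneg α x
        have := phi_nonneg (Real.sqrt 2 * u - x)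
        have := Real.sqrt_nonneg 2
        positivity),
    convEq]

lemma lintegral_comp_affine {a : ℝ} (ha : a ≠ 0) (x : ℝ) {H : ℝ → ℝ≥0∞}
    (hH : Measurable H) :
    (∫⁻ y : ℝ, H y) = ENNReal.ofReal |a| * ∫⁻ u : ℝ, H (a * u - x) := by
  have hmap : Measure.map (fun u : ℝ => a * u - x) volume
      = ENNReal.ofReal |a⁻¹| • volume := by
    have hcomp : (fun u : ℝ => a * u - x) = (fun v : ℝ => v + (-x)) ∘ (fun u => a * u) := by
      funext u; simp [sub_eq_add_neg]
    rw [hcomp, ← Measure.map_map (by fun_prop) (by fun_prop), Real.map_volume_mul_left ha,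
      Measure.map_smul, map_add_right_eq_self]
  calc (∫⁻ y : ℝ, H y)
      = ENNReal.ofReal |a| * (ENNReal.ofReal |a⁻¹| * ∫⁻ y : ℝ, H y) := by
        rw [← mul_assoc, ← ENNReal.ofReal_mul (abs_nonneg a), ← abs_mul, mul_inv_cancel₀ ha]
        simp
  _ = ENNReal.ofReal |a| * ∫⁻ y : ℝ, H y ∂(ENNReal.ofReal |a⁻¹| • volume) := by
        rw [lintegral_smul_measure, smul_eq_mul]
  _ = ENNReal.ofReal |a| * ∫⁻ u : ℝ, H (a * u - x) := by
        rw [← hmap, lintegral_map hH (by fun_prop)]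

/-- If X ∼ SN(α) and Z ∼ N(0,1) are independent, then (X+Z)/√2 ∼ SN(α/√(2+α²)). -/
theorem skewNormal_add_normal {Ω : Type*} [MeasureSpace Ω]
    [IsProbabilityMeasure (ℙ : Measure Ω)]
    (X Z : Ω → ℝ) (hX : Measurable X) (hZ : Measurable Z)
    (α : ℝ)
    (hlawX : Measure.map X ℙ = volume.withDensity fun x => ENNReal.ofReal (skewPdf α x))
    (hlawZ : Measure.map Z ℙ = gaussianReal 0 1)
    (hind : IndepFun X Z ℙ) :
    Measure.map (fun ω => (X ω + Z ω) / Real.sqrt 2) ℙ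
      = volume.withDensity fun x =>
          ENNReal.ofReal (skewPdf (α / Real.sqrt (2 + α ^ 2)) x) := by
  have hs2 : (0:ℝ) < Real.sqrt 2 := Real.sqrt_pos.2 (by norm_num)
  set f : ℝ → ℝ≥0∞ := fun x => ENNReal.ofReal (skewPdf α x) with hf
  set gd : ℝ → ℝ≥0∞ := fun x => ENNReal.ofReal (phi x) with hgd
  have hfm : Measurable f := ENNReal.measurable_ofReal.comp (continuous_skewPdf α).measurable
  have hgm : Measurable gd := ENNReal.measurable_ofReal.comp continuous_phi.measurable
  have hgauss : gaussianReal 0 1 = volume.withDensity gd := by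
    rw [ProbabilityTheory.gaussianReal_of_var_ne_zero _ one_ne_zero]
    congr 1
    funext x
    rw [hgd]
    show ProbabilityTheory.gaussianPDF 0 1 x = _
    unfold ProbabilityTheory.gaussianPDF ProbabilityTheory.gaussianPDFReal phi
    norm_num
  -- joint law
  have hjoint : Measure.map (fun ω => (X ω, Z ω)) ℙ
      = (volume.withDensity f).prod (volume.withDensity gd) := by
    rw [← hlawX, ← hgauss, ← hlawZ]
    exact (ProbabilityTheory.indepFun_iff_map_prod_eq_prod_map_map
      hX.aemeasurable hZ.aemeasurable).mp hind
  have hprob1 : IsProbabilityMeasure (volume.withDensity f) := by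
    rw [← hlawX]; exact Measure.isProbabilityMeasure_map hX.aemeasurable
  have hprob2 : IsProbabilityMeasure (volume.withDensity gd) := by
    rw [← hgauss]; infer_instance
  have hsmeas : Measurable (fun p : ℝ × ℝ => (p.1 + p.2) / Real.sqrt 2) := by fun_prop
  have hmapT : Measure.map (fun ω => (X ω + Z ω) / Real.sqrt 2) ℙ
      = Measure.map (fun p : ℝ × ℝ => (p.1 + p.2) / Real.sqrt 2)
          ((volume.withDensity f).prod (volume.withDensity gd)) := by
    rw [← hjoint, Measure.map_map hsmeas (hX.prodMk hZ)]
    rfl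
  rw [hmapT]
  refine Measure.ext fun A hA => ?_
  set χ : ℝ → ℝ≥0∞ := A.indicator 1 with hχ
  have hχm : Measurable χ := measurable_one.indicator hA
  rw [Measure.map_apply hsmeas hA, withDensity_apply _ hA]
  have hpre : MeasurableSet ((fun p : ℝ × ℝ => (p.1 + p.2) / Real.sqrt 2) ⁻¹' A) :=
    hsmeas hA
  -- step: express as lintegral of indicator
  rw [← lintegral_indicator_one hpre]
  have hind_eq : ∀ p : ℝ × ℝ,
      ((fun p : ℝ × ℝ => (p.1 + p.2) / Real.sqrt 2) ⁻¹' A).indicator 1 p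
        = χ ((p.1 + p.2) / Real.sqrt 2) := by
    intro p
    by_cases h : (p.1 + p.2) / Real.sqrt 2 ∈ A <;> simp [hχ, Set.indicator, h]
  calc (∫⁻ p, ((fun p : ℝ × ℝ => (p.1 + p.2) / Real.sqrt 2) ⁻¹' A).indicator 1 p
          ∂(volume.withDensity f).prod (volume.withDensity gd))
      = ∫⁻ p : ℝ × ℝ, χ ((p.1 + p.2) / Real.sqrt 2)
          ∂(volume.withDensity f).prod (volume.withDensity gd) := by
        exact lintegral_congr hind_eq
    _ = ∫⁻ x : ℝ, (∫⁻ y : ℝ, χ ((x + y) / Real.sqrt 2) ∂(volume.withDensity gd))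
          ∂(volume.withDensity f) := by
        exact lintegral_prod _ ((hχm.comp (by fun_prop)).aemeasurable)
    _ = ∫⁻ x : ℝ, (∫⁻ y : ℝ, gd y * χ ((x + y) / Real.sqrt 2)) ∂(volume.withDensity f) := by
        congr 1; funext x
        exact lintegral_withDensity_eq_lintegral_mul _ hgm (hχm.comp (by fun_prop))
    _ = ∫⁻ x : ℝ, f x * ∫⁻ y : ℝ, gd y * χ ((x + y) / Real.sqrt 2) := by
        refine lintegral_withDensity_eq_lintegral_mul _ hfm ?_
        exact Measurable.lintegral_prod_right (by fun_prop)
    _ = ∫⁻ x : ℝ, f x * (ENNReal.ofReal (Real.sqrt 2)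
          * ∫⁻ u : ℝ, gd (Real.sqrt 2 * u - x) * χ u) := by
        refine lintegral_congr fun x => ?_
        congr 1
        have h0 := lintegral_comp_affine (a := Real.sqrt 2) hs2.ne' x
          (H := fun y => gd y * χ ((x + y) / Real.sqrt 2))
          (hgm.mul (hχm.comp (by fun_prop)))
        rw [abs_of_pos hs2] at h0
        rw [h0]
        congr 1
        refine lintegral_congr fun u => ?_
        show gd (Real.sqrt 2 * u - x) * χ ((x + (Real.sqrt 2 * u - x)) / Real.sqrt 2) = _
        rw [show x + (Real.sqrt 2 * u - x) = Real.sqrt 2 * u by ring,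
          show Real.sqrt 2 * u / Real.sqrt 2 = u by field_simp]
    _ = ∫⁻ x : ℝ, ∫⁻ u : ℝ, (ENNReal.ofReal (Real.sqrt 2) * f x
          * gd (Real.sqrt 2 * u - x)) * χ u := by
        congr 1; funext x
        rw [← lintegral_const_mul _ (by fun_prop), ← lintegral_const_mul _ (by fun_prop)]
        congr 1; funext u
        ring
    _ = ∫⁻ u : ℝ, ∫⁻ x : ℝ, (ENNReal.ofReal (Real.sqrt 2) * f x
          * gd (Real.sqrt 2 * u - x)) * χ u := by
        exact lintegral_lintegral_swap (by fun_prop)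
    _ = ∫⁻ u : ℝ, χ u * ENNReal.ofReal (skewPdf (α / Real.sqrt (2 + α ^ 2)) u) := by
        refine lintegral_congr fun u => ?_
        rw [lintegral_mul_const _ (by fun_prop), mul_comm]
        congr 1
        rw [← lint_conv α u]
        refine lintegral_congr fun x => ?_
        rw [hf, hgd,
          ENNReal.ofReal_mul (mul_nonneg (Real.sqrt_nonneg 2) (skewPdf_nonneg α x)),
          ENNReal.ofReal_mul (Real.sqrt_nonneg 2)]
    _ = ∫⁻ u in A, ENNReal.ofReal (skewPdf (α / Real.sqrt (2 + α ^ 2)) u) := by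
        rw [← lintegral_indicator hA]
        congr 1; funext u
        by_cases h : u ∈ A <;> simp [hχ, Set.indicator, h]
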